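/- Let A be a unital Banach algebra over ℂ, let X_1, …, X_n ∈ A and let s ∈ ℝ. Then the function G : ℝ → A, G(θ) = ∏_{j=1}^{n} exp(s·θ • X_j), is four times differentiable, and for every θ, the fourth derivative of G at θ equals s⁴ • Σ_{(m_1,…,m_n) ∈ ℕⁿ, m_1+⋯+m_n = 4} (4! / (m_1! ⋯ m_n!)) ∏_{j=1}^{n} ( X_j^{m_j} · exp(s·θ • X_j) ), where the outer product is taken in the order j = 1, …, n. -/

import Mathlib

/-!
The general Leibniz rule `(f₁ ⋯ fₙ)⁽ᵏ⁾ = ∑_{|m| = k} (k choose m) f₁⁽ᵐ¹⁾ ⋯ fₙ⁽ᵐⁿ⁾` holds for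
ordered products in a noncommutative algebra, since the two-factor rule never reorders factors;
it follows by induction on `n` from `(k choose (a, m')) = (k choose a) (k - a choose m')`.
For `fⱼ(θ) = exp(sθ • Xⱼ)` the derivatives are `fⱼ⁽ᵐ⁾(θ) = sᵐ Xⱼᵐ exp(sθ • Xⱼ)`, and the scalar
factors of each term multiply to `s^|m| = s⁴`.
-/

open Finset NormedSpace

theorem Finset.Nat.sum_antidiagonalTuple_succ {M : Type*} [AddCommMonoid M] (n k : ℕ)
    (g : (Fin (n + 1) → ℕ) → M) :
    ∑ m ∈ antidiagonalTuple (n + 1) k, g m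
      = ∑ p ∈ antidiagonal k, ∑ m ∈ antidiagonalTuple n p.2, g (Fin.cons p.1 m) := by
  rw [sum_sigma']
  refine sum_bij' (fun m _ => ⟨(m 0, k - m 0), Fin.tail m⟩)
    (fun q _ => Fin.cons q.1.1 q.2) ?_ ?_ ?_ ?_ ?_ <;>
    simp +contextual only [mem_sigma, HasAntidiagonal.mem_antidiagonal, mem_antidiagonalTuple,
      Fin.sum_univ_succ, Fin.cons_zero, Fin.cons_succ, Fin.cons_self_tail, Fin.tail, Fin.tail_cons,
      implies_true, and_imp]
  · omega
  · rintro ⟨⟨a, b⟩, m⟩ rfl -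
    rw [Nat.add_sub_cancel_left]

theorem Finset.Nat.antidiagonalTuple_eq_filter_piFinset (n k : ℕ) :
    antidiagonalTuple n k
      = (Fintype.piFinset fun _ : Fin n => range (k + 1)).filter (fun m => ∑ j, m j = k) := by
  ext m
  simp only [mem_antidiagonalTuple, mem_filter, Fintype.mem_piFinset, mem_range, iff_and_self]
  rintro rfl j
  exact Nat.lt_succ_of_le (single_le_sum (fun j _ => Nat.zero_le (m j)) (mem_univ j))

theorem Nat.multinomial_univ_fin_cons (n a : ℕ) (m : Fin n → ℕ) :
    multinomial univ (Fin.cons a m : Fin (n + 1) → ℕ)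
      = (a + ∑ j, m j).choose a * multinomial univ m := by
  rw [Fin.univ_succ, multinomial_cons]
  simp [multinomial, sum_map, prod_map]

theorem List.prod_ofFn_smul {R A : Type*} [CommSemiring R] [Semiring A] [Algebra R A] :
    ∀ {n : ℕ} (c : Fin n → R) (a : Fin n → A),
      (ofFn fun j => c j • a j).prod = (∏ j, c j) • (ofFn a).prod
  | 0, _, _ => by simp
  | n + 1, c, a => by
    simp only [ofFn_succ, prod_cons, List.prod_ofFn_smul (fun j => c j.succ), mul_smul_comm,
      smul_mul_assoc, Fin.prod_univ_succ, mul_smul]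
    exact smul_comm _ _ _

section Leibniz

variable {𝕜 : Type*} [NontriviallyNormedField 𝕜] {A : Type*} [NormedRing A] [NormedAlgebra 𝕜 A]

theorem ContDiff.list_ofFn_prod {E : Type*} [NormedAddCommGroup E] [NormedSpace 𝕜 E]
    {N : WithTop ℕ∞} :
    ∀ {n : ℕ} {f : Fin n → E → A}, (∀ j, ContDiff 𝕜 N (f j)) →
      ContDiff 𝕜 N (fun x => (List.ofFn fun j => f j x).prod)
  | 0, _, _ => by simpa using contDiff_const
  | n + 1, f, hf => by
    simpa [List.ofFn_succ] using (hf 0).mul (ContDiff.list_ofFn_prod fun j => hf j.succ)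

theorem iteratedDeriv_list_ofFn_prod :
    ∀ {n k : ℕ} {f : Fin n → 𝕜 → A}, (∀ j, ContDiff 𝕜 k (f j)) → ∀ x,
      iteratedDeriv k (fun x => (List.ofFn fun j => f j x).prod) x
        = ∑ m ∈ Nat.antidiagonalTuple n k,
            Nat.multinomial univ m • (List.ofFn fun j => iteratedDeriv (m j) (f j) x).prod
  | 0, 0, _, _, x => by simp
  | 0, k + 1, _, _, x => by simp [iteratedDeriv_const]
  | n + 1, k, f, hf, x => by
    simp only [List.ofFn_succ, List.prod_cons]
    rw [iteratedDeriv_fun_mul (hf 0).contDiffAt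
        (ContDiff.list_ofFn_prod fun j => hf j.succ).contDiffAt,
      Nat.sum_antidiagonalTuple_succ, Nat.sum_antidiagonal_eq_sum_range_succ_mk]
    refine sum_congr rfl fun i hi => ?_
    rw [iteratedDeriv_list_ofFn_prod (fun j => (hf j.succ).of_le (by norm_cast; omega)),
      mul_sum]
    refine sum_congr rfl fun m hm => ?_
    have hsum : i + ∑ j, m j = k := by
      have := mem_range.mp hi
      rw [Nat.mem_antidiagonalTuple.mp hm]
      omega
    simp only [Fin.cons_zero, Fin.cons_succ, Nat.multinomial_univ_fin_cons, hsum, nsmul_eq_mul,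
      Nat.cast_mul, mul_assoc]
    rw [(Nat.cast_commute (Nat.multinomial univ m) (iteratedDeriv i (f 0) x)).left_comm]

end Leibniz

section Exp

variable {𝕂 : Type*} [RCLike 𝕂] {A : Type*} [NormedRing A] [NormedAlgebra 𝕂 A] [CompleteSpace A]

theorem contDiff_exp_smul_const {N : WithTop ℕ∞} (Y : A) :
    ContDiff 𝕂 N (fun t : 𝕂 => exp (t • Y)) :=
  contDiff_iff_contDiffAt.2 fun t =>
    (exp_analytic (t • Y)).contDiffAt.comp t (contDiff_id.smul contDiff_const).contDiffAt

theorem iteratedDeriv_exp_smul_const (Y : A) (k : ℕ) (t : 𝕂) :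
    iteratedDeriv k (fun t : 𝕂 => exp (t • Y)) t = Y ^ k * exp (t • Y) := by
  induction k generalizing t with
  | zero => simp
  | succ k ih =>
    rw [iteratedDeriv_succ, funext ih, ((hasDerivAt_exp_smul_const' Y t).const_mul _).deriv,
      pow_succ, mul_assoc]

theorem iteratedDeriv_exp_mul_smul_const (Y : A) (c : 𝕂) (k : ℕ) (t : 𝕂) :
    iteratedDeriv k (fun t : 𝕂 => exp ((c * t) • Y)) t
      = c ^ k • (Y ^ k * exp ((c * t) • Y)) := by
  simp only [iteratedDeriv_comp_const_smul (contDiff_exp_smul_const Y) c,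
    iteratedDeriv_exp_smul_const]

end Exp

theorem stmt_17_general {A : Type*} [NormedRing A] [NormedAlgebra ℂ A]
    [CompleteSpace A] (n : ℕ) (X : Fin n → A) (s : ℝ) :
    ContDiff ℝ 4 (fun θ : ℝ => (List.ofFn fun j => exp ((s * θ) • X j)).prod)
      ∧ ∀ θ : ℝ,
        iteratedDeriv 4 (fun θ : ℝ => (List.ofFn fun j => exp ((s * θ) • X j)).prod) θ
          = s ^ 4 • ∑ m ∈ (Fintype.piFinset fun _ : Fin n => Finset.range 5).filter
                (fun m : Fin n → ℕ => ∑ j : Fin n, m j = 4),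
              (Nat.multinomial Finset.univ m : ℝ) •
                (List.ofFn fun j => X j ^ m j * exp ((s * θ) • X j)).prod := by
  have hexp : ∀ j, ContDiff ℝ 4 (fun θ : ℝ => exp ((s * θ) • X j)) := fun j =>
    (contDiff_exp_smul_const (X j)).comp (contDiff_const.mul contDiff_id)
  refine ⟨ContDiff.list_ofFn_prod hexp, fun θ => ?_⟩
  rw [iteratedDeriv_list_ofFn_prod hexp, ← Nat.antidiagonalTuple_eq_filter_piFinset, smul_sum]
  refine sum_congr rfl fun m hm => ?_
  simp only [iteratedDeriv_exp_mul_smul_const, List.prod_ofFn_smul, prod_pow_eq_pow_sum,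
    Nat.mem_antidiagonalTuple.mp hm, Nat.cast_smul_eq_nsmul, smul_comm (s ^ 4)]

/-- The general-Leibniz-rule formula (equation 46 of Appendix A) for the fourth
derivative of the Trotter product `G(θ) = ∏_{j=1}^{n} exp(s·θ • X_j)`:
`G` is four times differentiable and
`G⁗(θ) = s⁴ • Σ_{m : Σ_j m_j = 4} (4!/(m₁!⋯m_n!)) ∏_j (X_j^{m_j} exp(s·θ • X_j))`. -/
theorem stmt_17 {A : Type*} [NormedRing A] [NormedAlgebra ℂ A]
    [CompleteSpace A] [NormOneClass A] (n : ℕ) (X : Fin n → A) (s : ℝ) :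
    ContDiff ℝ 4 (fun θ : ℝ => (List.ofFn fun j => exp ((s * θ) • X j)).prod)
      ∧ ∀ θ : ℝ,
        iteratedDeriv 4 (fun θ : ℝ => (List.ofFn fun j => exp ((s * θ) • X j)).prod) θ
          = s ^ 4 • ∑ m ∈ (Fintype.piFinset fun _ : Fin n => Finset.range 5).filter
                (fun m : Fin n → ℕ => ∑ j : Fin n, m j = 4),
              (Nat.multinomial Finset.univ m : ℝ) •
                (List.ofFn fun j => X j ^ m j * exp ((s * θ) • X j)).prod :=
  stmt_17_general n X s
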